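/- Star-shaped graph state reduction is SBS: in the (N+1)-qubit space ℂ² ⊗ (ℂ²)^{⊗N}, let |G⟩ = ∏_{k=1}^{N} CZ_{S,k} (|+⟩ ⊗ |+⟩^{⊗N}), where |±⟩ = (|0⟩ ± |1⟩)/√2 and CZ_{S,k} = |0⟩⟨0|_S ⊗ 1 + |1⟩⟨1|_S ⊗ Z_k is the controlled-phase gate between the system qubit S and the k-th environment qubit (Z_k = σ_z acting on qubit k, identity elsewhere). Then for every n with 1 ≤ n < N, tracing out the last N−n environment qubits gives tr_{n+1,…,N} |G⟩⟨G| = ½ |0⟩⟨0| ⊗ (|+⟩⟨+|)^{⊗n} + ½ |1⟩⟨1| ⊗ (|−⟩⟨−|)^{⊗n}, which is a Spectrum Broadcast Structure since ⟨+|−⟩ = 0. -/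

import Mathlib

open scoped Kronecker Matrix ComplexOrder BigOperators
open Matrix

noncomputable section

/-- The rank-one operator `|v⟩⟨w| = v wᴴ`. -/
def ketBra {n : Type*} (v w : n → ℂ) : Matrix n n ℂ := Matrix.vecMulVec v (star w)

/-- A density matrix: positive semidefinite with unit trace. -/
def IsDensityMatrix {n : Type*} [Fintype n] (ρ : Matrix n n ℂ) : Prop :=
  ρ.PosSemidef ∧ ρ.trace = 1

/-- An orthonormal family of vectors. -/
def OrthonormalFamily {n I : Type*} [Fintype n] [DecidableEq I] (e : I → n → ℂ) : Prop :=
  ∀ i j, star (e i) ⬝ᵥ e j = (if i = j then 1 else 0)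

/-- The `N`-fold Kronecker (tensor) product of a family of matrices. -/
def tensorFamily {N : ℕ} {D : Fin N → ℕ} (M : ∀ k, Matrix (Fin (D k)) (Fin (D k)) ℂ) :
    Matrix (∀ k, Fin (D k)) (∀ k, Fin (D k)) ℂ :=
  fun a a' => ∏ k, M k (a k) (a' k)

/-- The Kronecker (tensor) product of the matrices `M k` over the factors `k ∈ K`. -/
def tensorOn {N : ℕ} {D : Fin N → ℕ} (K : Finset (Fin N))
    (M : ∀ k, Matrix (Fin (D k)) (Fin (D k)) ℂ) :
    Matrix (∀ k : K, Fin (D k.1)) (∀ k : K, Fin (D k.1)) ℂ :=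
  fun a a' => ∏ k : K, M k.1 (a k) (a' k)

/-- The partial trace of a matrix on an `N`-fold tensor product over all
tensor factors *not* in `K` (entrywise: sum over equal indices in the traced factors). -/
def reduceTo {N : ℕ} {D : Fin N → ℕ} (K : Finset (Fin N))
    (M : Matrix (∀ k, Fin (D k)) (∀ k, Fin (D k)) ℂ) :
    Matrix (∀ k : K, Fin (D k.1)) (∀ k : K, Fin (D k.1)) ℂ :=
  fun a a' => ∑ b : ∀ k : {k : Fin N // k ∉ K}, Fin (D k.1),
    M (fun k => if h : k ∈ K then a ⟨k, h⟩ else b ⟨k, h⟩)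
      (fun k => if h : k ∈ K then a' ⟨k, h⟩ else b ⟨k, h⟩)

/-- The single-party reduction: the partial trace over all tensor factors except the `k`-th. -/
def reduceSingle {N : ℕ} {D : Fin N → ℕ} (k : Fin N)
    (M : Matrix (∀ l, Fin (D l)) (∀ l, Fin (D l)) ℂ) :
    Matrix (Fin (D k)) (Fin (D k)) ℂ :=
  fun a a' => ∑ b : ∀ l : {l : Fin N // l ≠ k}, Fin (D l.1),
    M (fun l => if h : l = k then cast (congrArg (fun i => Fin (D i)) h.symm) a else b ⟨l, h⟩)
      (fun l => if h : l = k then cast (congrArg (fun i => Fin (D i)) h.symm) a' else b ⟨l, h⟩)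

/-- The basis vector `|0⟩` of a qubit. -/
def ket0 : Fin 2 → ℂ := fun i => if i = 0 then 1 else 0

/-- The basis vector `|1⟩` of a qubit. -/
def ket1 : Fin 2 → ℂ := fun i => if i = 1 then 1 else 0

/-- The Pauli `z` matrix. -/
def σz : Matrix (Fin 2) (Fin 2) ℂ := !![1, 0; 0, -1]

/-- The qubit state `|+⟩ = (|0⟩ + |1⟩)/√2`. -/
def ketPlus : Fin 2 → ℂ := fun _ => ((Real.sqrt 2 : ℝ)⁻¹ : ℂ)

/-- The qubit state `|−⟩ = (|0⟩ − |1⟩)/√2`. -/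
def ketMinus : Fin 2 → ℂ :=
  fun i => if i = 0 then ((Real.sqrt 2 : ℝ)⁻¹ : ℂ) else -((Real.sqrt 2 : ℝ)⁻¹ : ℂ)

/-- The controlled-phase gate `CZ_{S,k} = |0⟩⟨0|_S ⊗ 1 + |1⟩⟨1|_S ⊗ Z_k` between the
system qubit and the `k`-th environment qubit. -/
def CZgate (N : ℕ) (k : Fin N) :
    Matrix (Fin 2 × ((l : Fin N) → Fin 2)) (Fin 2 × ((l : Fin N) → Fin 2)) ℂ :=
  ketBra ket0 ket0 ⊗ₖ (1 : Matrix ((l : Fin N) → Fin 2) ((l : Fin N) → Fin 2) ℂ) +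
  ketBra ket1 ket1 ⊗ₖ tensorFamily (D := fun _ => 2) (fun l => if l = k then σz else 1)

/-- The star-shaped graph state `|G⟩ = ∏ₖ CZ_{S,k} (|+⟩ ⊗ |+⟩^{⊗N})`. -/
def starG (N : ℕ) : (Fin 2 × ((l : Fin N) → Fin 2)) → ℂ :=
  (((List.finRange N).map (CZgate N)).prod) *ᵥ
    (fun p => ketPlus p.1 * ∏ k, ketPlus (p.2 k))

/-- Partial trace over the last `N − n` environment qubits. -/
def traceTail {N : ℕ} (n : ℕ) (hn : n ≤ N)
    (M : Matrix (Fin 2 × ((l : Fin N) → Fin 2)) (Fin 2 × ((l : Fin N) → Fin 2)) ℂ) :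
    Matrix (Fin 2 × ((l : Fin n) → Fin 2)) (Fin 2 × ((l : Fin n) → Fin 2)) ℂ :=
  fun p q => ∑ c : Fin (N - n) → Fin 2,
    M (p.1, fun k => if h : (k : ℕ) < n then p.2 ⟨k, h⟩
        else c ⟨(k : ℕ) - n, by have := k.isLt; omega⟩)
      (q.1, fun k => if h : (k : ℕ) < n then q.2 ⟨k, h⟩
        else c ⟨(k : ℕ) - n, by have := k.isLt; omega⟩)

/-!
Every gate `CZ_{S,k}` is diagonal in the computational basis, so the amplitudes of the star
graph state factorise: `⟨s, b|G⟩ = 2^{-1/2} ∏ₖ χ_s(b_k)` with `χ₀ = |+⟩`, `χ₁ = |−⟩`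
(`pointerState`), i.e. the system in `|s⟩` imprints `Z^s` on every environment qubit.
Tracing out the last `N − n` qubits therefore multiplies the `(s, t)` block by
`⟨χ_t|χ_s⟩^{N−n} = δ_{st}`, which kills the coherences because `N − n ≥ 1`.
-/

theorem tensorFamily_diagonal {N : ℕ} {D : Fin N → ℕ} (d : ∀ k, Fin (D k) → ℂ) :
    tensorFamily (fun k => diagonal (d k)) = diagonal fun a => ∏ k, d k (a k) := by
  ext a a'
  by_cases h : a = a'
  · subst h
    simp [tensorFamily]
  · obtain ⟨k, hk⟩ := Function.ne_iff.mp h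
    simp only [tensorFamily, diagonal_apply_ne _ h]
    exact Finset.prod_eq_zero (Finset.mem_univ k) (diagonal_apply_ne _ hk)

theorem σz_eq_diagonal : σz = diagonal ![1, -1] := by
  ext i j
  fin_cases i <;> fin_cases j <;> simp [σz]

theorem ketBra_ket0 : ketBra ket0 ket0 = diagonal ket0 := by
  ext i j
  fin_cases i <;> fin_cases j <;> simp [ketBra, ket0, vecMulVec_apply]

theorem ketBra_ket1 : ketBra ket1 ket1 = diagonal ket1 := by
  ext i j
  fin_cases i <;> fin_cases j <;> simp [ketBra, ket1, vecMulVec_apply]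

def czPhase (s a : Fin 2) : ℂ := ket0 s + ket1 s * ![1, -1] a

theorem CZgate_eq_diagonal (N : ℕ) (k : Fin N) :
    CZgate N k = diagonal fun p => czPhase p.1 (p.2 k) := by
  have hZ : (fun l => if l = k then σz else 1) =
      fun l => diagonal (if l = k then ![1, -1] else 1) := by
    funext l
    split_ifs <;> simp [σz_eq_diagonal]
  rw [CZgate, hZ, tensorFamily_diagonal, ketBra_ket0, ketBra_ket1, ← diagonal_one,
    diagonal_kronecker_diagonal, diagonal_kronecker_diagonal, diagonal_add]
  congr 1
  funext p
  rw [Finset.prod_eq_single k (fun l _ hl => by simp [hl]) (by simp)]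
  simp [czPhase]

theorem list_prod_map_diagonal {ι n R : Type*} [Fintype n] [DecidableEq n] [Semiring R]
    (l : List ι) (d : ι → n → R) :
    (l.map fun i => diagonal (d i)).prod = diagonal (l.map d).prod := by
  induction l with
  | nil => simp
  | cons i l ih => simp [ih]

theorem Fin.prod_dite_lt_eq_mul {α M : Type*} [CommMonoid M] {N n : ℕ} (h : n ≤ N) (F : α → M)
    (r : Fin n → α) (c : Fin (N - n) → α) :
    ∏ k : Fin N, F (if h' : (k : ℕ) < n then r ⟨k, h'⟩
        else c ⟨(k : ℕ) - n, by have := k.isLt; omega⟩) =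
      (∏ k, F (r k)) * ∏ j, F (c j) := by
  rw [← Fin.prod_congr' _ (by omega : n + (N - n) = N), Fin.prod_univ_add]
  congr 1 <;> refine Finset.prod_congr rfl fun k _ => ?_
  · simp
  · rw [dif_neg (by simp)]
    congr 2
    simp

def pointerState : Fin 2 → Fin 2 → ℂ := ![ketPlus, ketMinus]

theorem inv_sqrt_two_mul_self : ((Real.sqrt 2 : ℝ)⁻¹ : ℂ) * ((Real.sqrt 2 : ℝ)⁻¹ : ℂ) = 1 / 2 := by
  rw [← mul_inv, ← Complex.ofReal_mul, Real.mul_self_sqrt zero_le_two]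
  norm_num

theorem orthonormalFamily_pointerState : OrthonormalFamily pointerState := by
  have h := inv_sqrt_two_mul_self
  intro i j
  fin_cases i <;> fin_cases j <;>
    simp [pointerState, ketPlus, ketMinus, dotProduct, Fin.sum_univ_two] <;>
    linear_combination 2 * h

theorem czPhase_mul_ketPlus (s a : Fin 2) :
    czPhase s a * ketPlus a = pointerState s a := by
  fin_cases s <;> fin_cases a <;> simp [czPhase, ket0, ket1, ketPlus, ketMinus, pointerState]

theorem starG_apply (N : ℕ) (x : Fin 2 × (Fin N → Fin 2)) :
    starG N x = ((Real.sqrt 2 : ℝ)⁻¹ : ℂ) * ∏ k, pointerState x.1 (x.2 k) := by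
  rw [starG, funext (CZgate_eq_diagonal N), list_prod_map_diagonal, mulVec_diagonal, Pi.list_prod_apply, List.map_map,
    ← Fin.prod_univ_def, ← Finset.prod_congr rfl fun k _ => czPhase_mul_ketPlus x.1 (x.2 k),
    Finset.prod_mul_distrib]
  simp only [Function.comp_apply, ketPlus]
  ring

theorem traceTail_ketBra_apply {N : ℕ} (n : ℕ) (h : n ≤ N) (v : Fin 2 × (Fin N → Fin 2) → ℂ)
    (α : ℂ) (f : Fin 2 → Fin 2 → ℂ) (hv : ∀ x, v x = α * ∏ k, f x.1 (x.2 k))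
    (s t : Fin 2) (p q : Fin n → Fin 2) :
    traceTail n h (ketBra v v) (s, p) (t, q) =
      α * star α * (∏ k, f s (p k) * star (f t (q k))) * (star (f t) ⬝ᵥ f s) ^ (N - n) := by
  simp only [traceTail, ketBra, vecMulVec_apply, Pi.star_apply, hv, Fin.prod_dite_lt_eq_mul h,
    star_mul', star_prod]
  rw [dotProduct_comm, dotProduct, Fintype.sum_pow, Finset.mul_sum]
  refine Finset.sum_congr rfl fun c _ => ?_
  simp only [Pi.star_apply, Finset.prod_mul_distrib]
  ring

theorem stmt_18_general (N n : ℕ) (h2 : n < N) :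
    traceTail n h2.le (ketBra (starG N) (starG N)) =
      ((1 : ℂ) / 2) • (ketBra ket0 ket0 ⊗ₖ
        ketBra (fun b : (l : Fin n) → Fin 2 => ∏ k, ketPlus (b k))
               (fun b : (l : Fin n) → Fin 2 => ∏ k, ketPlus (b k))) +
      ((1 : ℂ) / 2) • (ketBra ket1 ket1 ⊗ₖ
        ketBra (fun b : (l : Fin n) → Fin 2 => ∏ k, ketMinus (b k))
               (fun b : (l : Fin n) → Fin 2 => ∏ k, ketMinus (b k))) ∧
    star ketPlus ⬝ᵥ ketMinus = 0 := by
  have hON := orthonormalFamily_pointerState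
  refine ⟨?_, by simpa [pointerState] using hON 0 1⟩
  ext ⟨s, p⟩ ⟨t, q⟩
  have hα : ((Real.sqrt 2 : ℝ)⁻¹ : ℂ) * star ((Real.sqrt 2 : ℝ)⁻¹ : ℂ) = 1 / 2 := by
    rw [Complex.star_def, map_inv₀, Complex.conj_ofReal, inv_sqrt_two_mul_self]
  rw [traceTail_ketBra_apply n h2.le _ _ _ (starG_apply N), hON, hα]
  fin_cases s <;> fin_cases t <;>
    simp [ket0, ket1, ketBra, vecMulVec_apply, pointerState,
      Finset.prod_mul_distrib, Nat.sub_ne_zero_of_lt h2]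

/-- Star-shaped graph state reduction is a Spectrum Broadcast Structure:
`tr_{n+1,…,N} |G⟩⟨G| = ½|0⟩⟨0| ⊗ (|+⟩⟨+|)^{⊗n} + ½|1⟩⟨1| ⊗ (|−⟩⟨−|)^{⊗n}`,
with `⟨+|−⟩ = 0`. -/
theorem stmt_18 (N n : ℕ) (h1 : 1 ≤ n) (h2 : n < N) :
    traceTail n h2.le (ketBra (starG N) (starG N)) =
      ((1 : ℂ) / 2) • (ketBra ket0 ket0 ⊗ₖ
        ketBra (fun b : (l : Fin n) → Fin 2 => ∏ k, ketPlus (b k))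
               (fun b : (l : Fin n) → Fin 2 => ∏ k, ketPlus (b k))) +
      ((1 : ℂ) / 2) • (ketBra ket1 ket1 ⊗ₖ
        ketBra (fun b : (l : Fin n) → Fin 2 => ∏ k, ketMinus (b k))
               (fun b : (l : Fin n) → Fin 2 => ∏ k, ketMinus (b k))) ∧
    star ketPlus ⬝ᵥ ketMinus = 0 :=
  stmt_18_general N n h2
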